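/- (Deterministic regret aggregation for OFUL with ridge confidence sets, without the bounded-reward assumption.) Let λ > 0, X > 0, S > 0, σ > 0, δ ∈ (0,1), d ≥ 1, and let 𝒳 ⊆ {x ∈ ℝ^d : ‖x‖₂ ≤ X}. Let θ* ∈ ℝ^d with ‖θ*‖₂ ≤ S and let x* ∈ 𝒳 satisfy ⟨x*, θ*⟩ = sup_{x∈𝒳} ⟨x, θ*⟩. Let x₁,…,x_T ∈ 𝒳, G_t := λ I_d + Σ_{s=1}^t x_s x_sᵀ, and √β_t := √λ S + σ √( 2 log(1/δ) + d log(1 + t X²/(λ d)) ). Suppose that for every 1 ≤ t ≤ T there exist θ̂_{t-1}, θ̃_t ∈ ℝ^d with ‖θ̂_{t-1} − θ*‖_{G_{t-1}} ≤ √β_{t-1}, ‖θ̃_t − θ̂_{t-1}‖_{G_{t-1}} ≤ √β_{t-1}, and ⟨θ̃_t, x_t⟩ ≥ ⟨θ*, x*⟩ (optimism on the confidence event). Then the pseudo-regret satisfies Σ_{t=1}^T ⟨x* − x_t, θ*⟩ ≤ 4 √( (X² / (λ log(1 + X²/λ))) · T d log(1 + T X²/(λ d)) ) · ( √λ S + σ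 √( 2 log(1/δ) + d log(1 + T X²/(λ d)) ) ). -/

import Mathlib

open Matrix Finset

namespace OFULAux

variable {d : ℕ}

lemma herm_dot_symm {M : Matrix (Fin d) (Fin d) ℝ} (hM : M.IsHermitian)
    (u v : Fin d → ℝ) : u ⬝ᵥ M *ᵥ v = v ⬝ᵥ M *ᵥ u := by
  have ht : Mᵀ = M := (by simpa using hM : M.IsSymm).eq
  rw [Matrix.dotProduct_mulVec, ← Matrix.mulVec_transpose, ht, dotProduct_comm]

lemma cs_psd {M : Matrix (Fin d) (Fin d) ℝ} (hM : M.PosSemidef) (u v : Fin d → ℝ) :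
    (u ⬝ᵥ M *ᵥ v) ^ 2 ≤ (u ⬝ᵥ M *ᵥ u) * (v ⬝ᵥ M *ᵥ v) := by
  have hsymm := herm_dot_symm hM.1 u v
  have key : ∀ t : ℝ, 0 ≤ (v ⬝ᵥ M *ᵥ v) * (t * t) + (2 * (u ⬝ᵥ M *ᵥ v)) * t + u ⬝ᵥ M *ᵥ u := by
    intro t
    have h0 := hM.dotProduct_mulVec_nonneg (u + t • v)
    simp only [star_trivial, Matrix.mulVec_add, Matrix.mulVec_smul, dotProduct_add,
      add_dotProduct, smul_dotProduct, dotProduct_smul, smul_eq_mul] at h0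
    rw [← hsymm] at h0
    nlinarith [h0]
  have hd := discrim_le_zero key
  rw [discrim] at hd
  nlinarith [hd]

lemma dot_le_sqrt {M : Matrix (Fin d) (Fin d) ℝ} (hM : M.PosDef) (u y : Fin d → ℝ) :
    u ⬝ᵥ y ≤ Real.sqrt (u ⬝ᵥ M *ᵥ u) * Real.sqrt (y ⬝ᵥ M⁻¹ *ᵥ y) := by
  have hu : IsUnit M.det := isUnit_iff_ne_zero.2 (ne_of_gt hM.det_pos)
  set v := M⁻¹ *ᵥ y with hv
  have h1 : M *ᵥ v = y := by
    rw [hv, Matrix.mulVec_mulVec, Matrix.mul_nonsing_inv _ hu, Matrix.one_mulVec]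
  have h2 : v ⬝ᵥ M *ᵥ v = y ⬝ᵥ M⁻¹ *ᵥ y := by
    rw [h1, dotProduct_comm]
  have h3 : u ⬝ᵥ y = u ⬝ᵥ M *ᵥ v := by rw [h1]
  have hcs := cs_psd hM.posSemidef u v
  rw [h2] at hcs
  rw [h3]
  have hnn1 : 0 ≤ u ⬝ᵥ M *ᵥ u := by simpa using hM.posSemidef.dotProduct_mulVec_nonneg u
  have hnn2 : 0 ≤ y ⬝ᵥ M⁻¹ *ᵥ y := by rw [← h2]; simpa using hM.posSemidef.dotProduct_mulVec_nonneg v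
  calc u ⬝ᵥ M *ᵥ v ≤ |u ⬝ᵥ M *ᵥ v| := le_abs_self _
    _ = Real.sqrt ((u ⬝ᵥ M *ᵥ v) ^ 2) := (Real.sqrt_sq_eq_abs _).symm
    _ ≤ Real.sqrt ((u ⬝ᵥ M *ᵥ u) * (y ⬝ᵥ M⁻¹ *ᵥ y)) := Real.sqrt_le_sqrt hcs
    _ = _ := Real.sqrt_mul hnn1 _

lemma vecMulVec_mulVec' (a b u : Fin d → ℝ) :
    vecMulVec a b *ᵥ u = (b ⬝ᵥ u) • a := by
  ext i
  simp only [Matrix.mulVec, vecMulVec_apply, dotProduct, Pi.smul_apply, smul_eq_mul,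
    Finset.sum_mul, Finset.mul_sum]
  exact Finset.sum_congr rfl fun j _ => by ring

lemma dot_sum_mulVec (s : Finset ℕ) (A : ℕ → Matrix (Fin d) (Fin d) ℝ) (u : Fin d → ℝ) :
    u ⬝ᵥ ((∑ i ∈ s, A i) *ᵥ u) = ∑ i ∈ s, u ⬝ᵥ (A i *ᵥ u) := by
  classical
  induction s using Finset.induction_on with
  | empty => simp [Matrix.mulVec, dotProduct]
  | insert _ _ h ih =>
      rw [Finset.sum_insert h, Finset.sum_insert h, Matrix.add_mulVec, dotProduct_add, ih]

lemma quad_form (lam : ℝ) (x : ℕ → Fin d → ℝ) (t : ℕ) (u : Fin d → ℝ) :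
    u ⬝ᵥ ((lam • (1 : Matrix (Fin d) (Fin d) ℝ) + ∑ s ∈ Icc 1 t, vecMulVec (x s) (x s)) *ᵥ u)
      = lam * (u ⬝ᵥ u) + ∑ s ∈ Icc 1 t, (x s ⬝ᵥ u) ^ 2 := by
  rw [Matrix.add_mulVec, dotProduct_add]
  congr 1
  · simp [Matrix.smul_mulVec, Matrix.one_mulVec, smul_eq_mul]
  · rw [dot_sum_mulVec]
    refine Finset.sum_congr rfl fun s _ => ?_
    rw [vecMulVec_mulVec', dotProduct_smul, smul_eq_mul, dotProduct_comm, sq]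

lemma G_posdef (lam : ℝ) (hlam : 0 < lam) (x : ℕ → Fin d → ℝ) (t : ℕ) :
    (lam • (1 : Matrix (Fin d) (Fin d) ℝ) + ∑ s ∈ Icc 1 t, vecMulVec (x s) (x s)).PosDef := by
  refine Matrix.PosDef.of_dotProduct_mulVec_pos ?_ ?_
  · show _ = _
    ext i j
    simp only [conjTranspose_apply, Matrix.add_apply, Matrix.smul_apply, Matrix.one_apply,
      Matrix.sum_apply, vecMulVec_apply, star_trivial, smul_eq_mul]
    have h1 : (if j = i then (1:ℝ) else 0) = if i = j then 1 else 0 := by simp [eq_comm]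
    rw [h1]
    congr 1
    exact Finset.sum_congr rfl fun s _ => by ring
  · intro u hu
    show (0:ℝ) < _
    simp only [star_trivial]
    rw [quad_form]
    have h1 : 0 < u ⬝ᵥ u := by
      have := Finset.sum_pos' (s := Finset.univ) (f := fun i => u i * u i)
        (fun i _ => mul_self_nonneg _)
      obtain ⟨i, hi⟩ := Function.ne_iff.mp hu
      exact this ⟨i, Finset.mem_univ i, mul_self_pos.mpr hi⟩
    have h2 : (0:ℝ) ≤ ∑ s ∈ Icc 1 t, (x s ⬝ᵥ u) ^ 2 :=
      Finset.sum_nonneg fun s _ => sq_nonneg _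
    nlinarith

lemma trace_eq_sum_eigs {M : Matrix (Fin d) (Fin d) ℝ} (hM : M.IsHermitian) :
    M.trace = ∑ i, hM.eigenvalues i := by
  conv_lhs => rw [hM.spectral_theorem, Unitary.conjStarAlgAut_apply]
  rw [Matrix.trace_mul_cycle]
  rw [show (star (hM.eigenvectorUnitary : Matrix (Fin d) (Fin d) ℝ)) *
      (hM.eigenvectorUnitary : Matrix (Fin d) (Fin d) ℝ) = 1 from
    Matrix.mem_unitaryGroup_iff'.mp hM.eigenvectorUnitary.2]
  simp [Matrix.trace_diagonal]

lemma det_le_trace_pow {M : Matrix (Fin d) (Fin d) ℝ} (hd : 1 ≤ d) (hM : M.PosSemidef) :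
    M.det ≤ (M.trace / d) ^ d := by
  have hdpos : (0:ℝ) < d := by exact_mod_cast hd
  have hnn : ∀ i, 0 ≤ hM.1.eigenvalues i := hM.eigenvalues_nonneg
  have hdet : M.det = ∏ i, hM.1.eigenvalues i := by
    have := hM.1.det_eq_prod_eigenvalues
    exact_mod_cast this
  rw [hdet, trace_eq_sum_eigs hM.1]
  have amgm := Real.geom_mean_le_arith_mean_weighted Finset.univ
    (fun _ => (d:ℝ)⁻¹) (fun i => hM.1.eigenvalues i)
    (fun _ _ => by positivity)
    (by simp [Finset.card_univ]; field_simp)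
    (fun i _ => hnn i)
  have h2 : (∏ i, hM.1.eigenvalues i ^ ((d:ℝ)⁻¹)) ^ (d:ℕ) = ∏ i, hM.1.eigenvalues i := by
    rw [← Finset.prod_pow]
    refine Finset.prod_congr rfl fun i _ => ?_
    rw [← Real.rpow_natCast (hM.1.eigenvalues i ^ ((d:ℝ)⁻¹)) d, ← Real.rpow_mul (hnn i)]
    rw [inv_mul_cancel₀ (ne_of_gt hdpos), Real.rpow_one]
  have h3 : (0:ℝ) ≤ ∏ i, hM.1.eigenvalues i ^ ((d:ℝ)⁻¹) :=
    Finset.prod_nonneg fun i _ => Real.rpow_nonneg (hnn i) _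
  calc ∏ i, hM.1.eigenvalues i = (∏ i, hM.1.eigenvalues i ^ ((d:ℝ)⁻¹)) ^ (d:ℕ) := h2.symm
    _ ≤ (∑ i, (d:ℝ)⁻¹ * hM.1.eigenvalues i) ^ (d:ℕ) := pow_le_pow_left₀ h3 amgm d
    _ = ((∑ i, hM.1.eigenvalues i) / d) ^ d := by
        rw [← Finset.mul_sum]; ring_nf

lemma det_add_vecMulVec {M : Matrix (Fin d) (Fin d) ℝ} (hM : M.PosDef) (y : Fin d → ℝ) :
    (M + vecMulVec y y).det = M.det * (1 + y ⬝ᵥ M⁻¹ *ᵥ y) := by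
  have hu : IsUnit M.det := isUnit_iff_ne_zero.2 (ne_of_gt hM.det_pos)
  rw [vecMulVec_eq Unit, Matrix.det_add_replicateCol_mul_replicateRow hu]
  congr 1
  rw [det_unique]
  simp only [Matrix.add_apply, Matrix.one_apply_eq, Matrix.mul_apply, Matrix.replicateRow_apply,
    Matrix.replicateCol_apply, Matrix.mulVec, dotProduct, Finset.sum_mul, Finset.mul_sum]
  congr 1
  rw [Finset.sum_comm]
  exact Finset.sum_congr rfl fun i _ => Finset.sum_congr rfl fun j _ => by ring

lemma mul_log_le {u c : ℝ} (hc : 0 < c) (hu0 : 0 ≤ u) (huc : u ≤ c) :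
    u * Real.log (1 + c) ≤ c * Real.log (1 + u) := by
  have hcon := strictConcaveOn_log_Ioi.concaveOn
  have hmem1 : (1:ℝ) + c ∈ Set.Ioi (0:ℝ) := by simp; linarith
  have hmem2 : (1:ℝ) ∈ Set.Ioi (0:ℝ) := by simp
  have ha : (0:ℝ) ≤ u / c := by positivity
  have hb : (0:ℝ) ≤ 1 - u / c := by
    have : u / c ≤ 1 := (div_le_one hc).2 huc
    linarith
  have hab : u / c + (1 - u / c) = 1 := by ring
  have := hcon.2 hmem1 hmem2 ha hb hab
  simp only [smul_eq_mul, Real.log_one, mul_one] at this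
  have heq : u / c * (1 + c) + (1 - u / c) = 1 + u := by field_simp; ring
  rw [heq, mul_zero, add_zero] at this
  calc u * Real.log (1 + c) = c * (u / c * Real.log (1 + c)) := by field_simp
    _ ≤ c * Real.log (1 + u) := by
        refine mul_le_mul_of_nonneg_left ?_ (le_of_lt hc)
        linarith [this]

lemma dot_sq_le (a b : Fin d → ℝ) : (a ⬝ᵥ b) ^ 2 ≤ (a ⬝ᵥ a) * (b ⬝ᵥ b) := by
  simpa [dotProduct, sq] using Finset.sum_mul_sq_le_sq_mul_sq Finset.univ a b

lemma dot_self_nonneg (a : Fin d → ℝ) : 0 ≤ a ⬝ᵥ a :=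
  Finset.sum_nonneg fun i _ => mul_self_nonneg _

end OFULAux

open OFULAux in
theorem stmt_18 {d : ℕ} (hd : 1 ≤ d) (lam X S σ δ : ℝ)
    (hlam : 0 < lam) (hX : 0 < X) (hS : 0 < S) (hσ : 0 < σ)
    (hδ : δ ∈ Set.Ioo (0 : ℝ) 1)
    (𝒳 : Set (Fin d → ℝ)) (h𝒳 : ∀ v ∈ 𝒳, Real.sqrt (v ⬝ᵥ v) ≤ X)
    (θs : Fin d → ℝ) (hθs : Real.sqrt (θs ⬝ᵥ θs) ≤ S)
    (xstar : Fin d → ℝ) (hxstar : xstar ∈ 𝒳)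
    (hopt : ∀ v ∈ 𝒳, v ⬝ᵥ θs ≤ xstar ⬝ᵥ θs)
    (T : ℕ) (x : ℕ → Fin d → ℝ) (hx : ∀ t ∈ Finset.Icc 1 T, x t ∈ 𝒳)
    (G : ℕ → Matrix (Fin d) (Fin d) ℝ)
    (hG : ∀ t, G t = lam • (1 : Matrix (Fin d) (Fin d) ℝ)
      + ∑ s ∈ Finset.Icc 1 t, vecMulVec (x s) (x s))
    (sβ : ℕ → ℝ)
    (hsβ : ∀ t, sβ t = Real.sqrt lam * S
      + σ * Real.sqrt (2 * Real.log (1 / δ) + d * Real.log (1 + t * X ^ 2 / (lam * d))))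
    (hconf : ∀ t ∈ Finset.Icc 1 T, ∃ θhat θtilde : Fin d → ℝ,
      Real.sqrt ((θhat - θs) ⬝ᵥ (G (t - 1) *ᵥ (θhat - θs))) ≤ sβ (t - 1) ∧
      Real.sqrt ((θtilde - θhat) ⬝ᵥ (G (t - 1) *ᵥ (θtilde - θhat))) ≤ sβ (t - 1) ∧
      xstar ⬝ᵥ θs ≤ θtilde ⬝ᵥ x t) :
    ∑ t ∈ Finset.Icc 1 T, (xstar - x t) ⬝ᵥ θs
      ≤ 4 * Real.sqrt ((X ^ 2 / (lam * Real.log (1 + X ^ 2 / lam)))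
          * (T * d * Real.log (1 + T * X ^ 2 / (lam * d))))
        * (Real.sqrt lam * S
          + σ * Real.sqrt (2 * Real.log (1 / δ)
            + d * Real.log (1 + T * X ^ 2 / (lam * d)))) := by
  classical
  have hdpos : (0:ℝ) < d := by exact_mod_cast hd
  have hdne : (d:ℝ) ≠ 0 := ne_of_gt hdpos
  have hGP : ∀ t, (G t).PosDef := fun t => by rw [hG t]; exact G_posdef lam hlam x t
  have hX2 : ∀ v ∈ 𝒳, v ⬝ᵥ v ≤ X ^ 2 := by
    intro v hv
    have h0 := dot_self_nonneg v
    have h1 := h𝒳 v hv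
    nlinarith [Real.sq_sqrt h0, Real.sqrt_nonneg (v ⬝ᵥ v)]
  set w : ℕ → ℝ := fun t => x t ⬝ᵥ (G (t-1))⁻¹ *ᵥ x t with hw
  have hwt : ∀ t, w t = x t ⬝ᵥ (G (t-1))⁻¹ *ᵥ x t := fun t => rfl
  have hwnn : ∀ t, 0 ≤ w t := fun t => by
    rw [hwt]
    simpa using (hGP (t-1)).inv.posSemidef.dotProduct_mulVec_nonneg (x t)
  have hβnn : ∀ t, 0 ≤ sβ t := fun t => by
    rw [hsβ t]; positivity
  have hβmono : ∀ a b : ℕ, a ≤ b → sβ a ≤ sβ b := by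
    intro a b hab
    rw [hsβ a, hsβ b]
    gcongr
    all_goals first
      | exact le_of_lt hσ
      | positivity
      | exact_mod_cast hab
  -- per-round norm bound
  have hwle : ∀ t ∈ Finset.Icc 1 T, w t ≤ X ^ 2 / lam := by
    intro t ht
    have hxX : x t ⬝ᵥ x t ≤ X ^ 2 := hX2 _ (hx t ht)
    have hM : (G (t-1)).PosDef := hGP _
    have hu : IsUnit (G (t-1)).det := isUnit_iff_ne_zero.2 (ne_of_gt hM.det_pos)
    set v := (G (t-1))⁻¹ *ᵥ x t with hv
    have h1 : G (t-1) *ᵥ v = x t := by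
      rw [hv, Matrix.mulVec_mulVec, Matrix.mul_nonsing_inv _ hu, Matrix.one_mulVec]
    have h2 : v ⬝ᵥ G (t-1) *ᵥ v = w t := by
      rw [h1, dotProduct_comm, hwt, hv]
    have hq : lam * (v ⬝ᵥ v) ≤ v ⬝ᵥ G (t-1) *ᵥ v := by
      have hq0 : v ⬝ᵥ G (t-1) *ᵥ v
          = lam * (v ⬝ᵥ v) + ∑ s ∈ Finset.Icc 1 (t-1), (x s ⬝ᵥ v) ^ 2 := by
        conv_lhs => rw [hG (t-1)]
        exact quad_form lam x (t-1) v
      rw [hq0]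
      have hnn := Finset.sum_nonneg (s := Finset.Icc 1 (t-1))
        (f := fun s => (x s ⬝ᵥ v) ^ 2) (fun s _ => sq_nonneg _)
      linarith
    have hcs : (x t ⬝ᵥ v) ^ 2 ≤ (x t ⬝ᵥ x t) * (v ⬝ᵥ v) := dot_sq_le _ _
    have hwteq : w t = x t ⬝ᵥ v := by rw [hwt, hv]
    rcases eq_or_lt_of_le (hwnn t) with h | h
    · rw [← h]; positivity
    · rw [le_div_iff₀ hlam]
      rw [h2] at hq
      rw [← hwteq] at hcs
      have hvv := dot_self_nonneg v
      have hxx := dot_self_nonneg (x t)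
      nlinarith [mul_le_mul_of_nonneg_left hq (le_of_lt (mul_pos (pow_pos hX 2) (inv_pos.2 hlam))), hcs, h, hq]
  -- per-round regret bound
  have hrnn : ∀ t ∈ Finset.Icc 1 T, 0 ≤ (xstar - x t) ⬝ᵥ θs := by
    intro t ht
    rw [sub_dotProduct]
    have := hopt (x t) (hx t ht)
    linarith
  have hstep : ∀ t ∈ Finset.Icc 1 T,
      (xstar - x t) ⬝ᵥ θs ≤ 2 * sβ T * Real.sqrt (w t) := by
    intro t ht
    obtain ⟨θhat, θtilde, hc1, hc2, hc3⟩ := hconf t ht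
    have hM : (G (t-1)).PosDef := hGP _
    have htT : t - 1 ≤ T := le_trans (Nat.sub_le t 1) (Finset.mem_Icc.mp ht).2
    have hb1 : (θhat - θs) ⬝ᵥ x t ≤ sβ T * Real.sqrt (w t) := by
      calc (θhat - θs) ⬝ᵥ x t
          ≤ Real.sqrt ((θhat - θs) ⬝ᵥ G (t-1) *ᵥ (θhat - θs)) * Real.sqrt (w t) := by
            rw [hwt]; exact dot_le_sqrt hM _ _
        _ ≤ sβ T * Real.sqrt (w t) :=
            mul_le_mul_of_nonneg_right (le_trans hc1 (hβmono _ _ htT)) (Real.sqrt_nonneg _)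
    have hb2 : (θtilde - θhat) ⬝ᵥ x t ≤ sβ T * Real.sqrt (w t) := by
      calc (θtilde - θhat) ⬝ᵥ x t
          ≤ Real.sqrt ((θtilde - θhat) ⬝ᵥ G (t-1) *ᵥ (θtilde - θhat)) * Real.sqrt (w t) := by
            rw [hwt]; exact dot_le_sqrt hM _ _
        _ ≤ sβ T * Real.sqrt (w t) :=
            mul_le_mul_of_nonneg_right (le_trans hc2 (hβmono _ _ htT)) (Real.sqrt_nonneg _)
    have hsplit : (xstar - x t) ⬝ᵥ θs ≤ (θtilde - θhat) ⬝ᵥ x t + (θhat - θs) ⬝ᵥ x t := by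
      have e1 : (xstar - x t) ⬝ᵥ θs = xstar ⬝ᵥ θs - x t ⬝ᵥ θs := sub_dotProduct _ _ _
      have e2 : (θtilde - θhat) ⬝ᵥ x t + (θhat - θs) ⬝ᵥ x t
          = θtilde ⬝ᵥ x t - θs ⬝ᵥ x t := by
        rw [sub_dotProduct, sub_dotProduct]; ring
      have e3 : θs ⬝ᵥ x t = x t ⬝ᵥ θs := dotProduct_comm _ _
      rw [e1, e2, e3]
      linarith [hc3]
    linarith [hb1, hb2, hsplit]
  -- telescoping determinant identity
  have htel : ∀ n : ℕ, ∑ t ∈ Finset.Icc 1 n, Real.log (1 + w t)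
      = Real.log ((G n).det) - Real.log ((G 0).det) := by
    intro n
    induction n with
    | zero => simp
    | succ k ih =>
        rw [Finset.sum_Icc_succ_top (by omega : 1 ≤ k + 1), ih]
        have hGs : G (k+1) = G k + vecMulVec (x (k+1)) (x (k+1)) := by
          rw [hG (k+1), hG k, Finset.sum_Icc_succ_top (by omega : 1 ≤ k + 1), add_assoc]
        have hdet : (G (k+1)).det = (G k).det * (1 + w (k+1)) := by
          rw [hGs, det_add_vecMulVec (hGP k)]
          rfl
        have hpos2 : (0:ℝ) < 1 + w (k+1) := by have := hwnn (k+1); linarith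
        rw [hdet, Real.log_mul (ne_of_gt (hGP k).det_pos) (ne_of_gt hpos2)]
        ring
  -- trace of G T
  have htr_eq : (G T).trace = lam * d + ∑ s ∈ Finset.Icc 1 T, x s ⬝ᵥ x s := by
    rw [hG T, Matrix.trace_add, Matrix.trace_smul, Matrix.trace_one, Matrix.trace_sum]
    have e1 : ∀ s ∈ Finset.Icc 1 T, (vecMulVec (x s) (x s)).trace = x s ⬝ᵥ x s := fun s _ => by
      simp [Matrix.trace, Matrix.diag, vecMulVec_apply, dotProduct]
    rw [Finset.sum_congr rfl e1]
    simp [Fintype.card_fin, smul_eq_mul]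
  have htr_ub : (G T).trace ≤ lam * d + T * X ^ 2 := by
    rw [htr_eq]
    have h2 : ∑ s ∈ Finset.Icc 1 T, x s ⬝ᵥ x s ≤ ∑ s ∈ Finset.Icc 1 T, X ^ 2 :=
      Finset.sum_le_sum fun s hs => hX2 _ (hx s hs)
    rw [Finset.sum_const, Nat.card_Icc] at h2
    simp only [Nat.add_sub_cancel, nsmul_eq_mul] at h2
    linarith
  have htr_lb : lam * d ≤ (G T).trace := by
    rw [htr_eq]
    have := Finset.sum_nonneg (s := Finset.Icc 1 T)
      (f := fun s => x s ⬝ᵥ x s) (fun s _ => dot_self_nonneg (x s))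
    linarith
  -- potential bound
  have hLTnn : (0:ℝ) ≤ Real.log (1 + T * X ^ 2 / (lam * d)) := by
    apply Real.log_nonneg
    have : (0:ℝ) ≤ T * X ^ 2 / (lam * d) := by positivity
    linarith
  have hpot : ∑ t ∈ Finset.Icc 1 T, Real.log (1 + w t)
      ≤ d * Real.log (1 + T * X ^ 2 / (lam * d)) := by
    rw [htel T]
    have hdet0 : (G 0).det = lam ^ d := by
      rw [hG 0]; simp [Matrix.det_smul, Fintype.card_fin]
    set A := (lam * d + T * X ^ 2) / d with hA
    have hApos : 0 < A := by positivity
    have htpos : 0 < (G T).trace / d := by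
      apply div_pos _ hdpos
      calc (0:ℝ) < lam * d := by positivity
        _ ≤ _ := htr_lb
    have hdetle := det_le_trace_pow hd (hGP T).posSemidef
    have hdiv : (G T).trace / d ≤ A := by
      rw [hA]
      exact (div_le_div_iff_of_pos_right hdpos).2 htr_ub
    have h5 : (G T).det ≤ A ^ d :=
      le_trans hdetle (pow_le_pow_left₀ (le_of_lt htpos) hdiv d)
    have h6 : Real.log ((G T).det) ≤ d * Real.log A := by
      calc Real.log ((G T).det) ≤ Real.log (A ^ d) :=
            Real.log_le_log (hGP T).det_pos h5
        _ = d * Real.log A := by rw [Real.log_pow]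
    have h7 : Real.log ((G 0).det) = d * Real.log lam := by
      rw [hdet0, Real.log_pow]
    have h8 : Real.log A - Real.log lam = Real.log (1 + T * X ^ 2 / (lam * d)) := by
      rw [← Real.log_div (ne_of_gt hApos) (ne_of_gt hlam)]
      have hAlam : A / lam = 1 + (T:ℝ) * X ^ 2 / (lam * d) := by
        rw [hA]; field_simp
      rw [hAlam]
    rw [h7]
    calc Real.log ((G T).det) - (d:ℝ) * Real.log lam
        ≤ (d:ℝ) * Real.log A - (d:ℝ) * Real.log lam := by linarith
      _ = (d:ℝ) * (Real.log A - Real.log lam) := by ring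
      _ = _ := by rw [h8]
  -- sum of w bound
  have hL1 : 0 < Real.log (1 + X ^ 2 / lam) := by
    apply Real.log_pos
    have : (0:ℝ) < X ^ 2 / lam := by positivity
    linarith
  set L1 := Real.log (1 + X ^ 2 / lam) with hL1def
  set LT := Real.log (1 + T * X ^ 2 / (lam * d)) with hLTdef
  have hwsum : ∑ t ∈ Finset.Icc 1 T, w t
      ≤ X ^ 2 / (lam * L1) * ((d:ℝ) * LT) := by
    have hper : ∀ t ∈ Finset.Icc 1 T, w t * L1 ≤ X ^ 2 / lam * Real.log (1 + w t) := by
      intro t ht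
      exact mul_log_le (by positivity) (hwnn t) (hwle t ht)
    have hsum1 : (∑ t ∈ Finset.Icc 1 T, w t) * L1
        ≤ X ^ 2 / lam * ∑ t ∈ Finset.Icc 1 T, Real.log (1 + w t) := by
      rw [Finset.sum_mul, Finset.mul_sum]
      exact Finset.sum_le_sum hper
    have hsum2 : X ^ 2 / lam * ∑ t ∈ Finset.Icc 1 T, Real.log (1 + w t)
        ≤ X ^ 2 / lam * ((d:ℝ) * LT) :=
      mul_le_mul_of_nonneg_left hpot (by positivity)
    have hkey := le_trans hsum1 hsum2
    calc ∑ t ∈ Finset.Icc 1 T, w t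
        = (∑ t ∈ Finset.Icc 1 T, w t) * L1 / L1 := by field_simp
      _ ≤ X ^ 2 / lam * ((d:ℝ) * LT) / L1 := by
          exact (div_le_div_iff_of_pos_right hL1).2 hkey
      _ = X ^ 2 / (lam * L1) * ((d:ℝ) * LT) := by field_simp
  -- Cauchy-Schwarz aggregation
  set R := ∑ t ∈ Finset.Icc 1 T, (xstar - x t) ⬝ᵥ θs with hRdef
  have hRnn : 0 ≤ R := Finset.sum_nonneg hrnn
  have hCS : R ^ 2 ≤ T * ∑ t ∈ Finset.Icc 1 T, ((xstar - x t) ⬝ᵥ θs) ^ 2 := by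
    have hcs2 := Finset.sum_mul_sq_le_sq_mul_sq (Finset.Icc 1 T)
      (fun _ => (1:ℝ)) (fun t => (xstar - x t) ⬝ᵥ θs)
    simp only [one_mul, one_pow, Finset.sum_const, Nat.card_Icc, Nat.add_sub_cancel,
      nsmul_eq_mul, mul_one] at hcs2
    rw [hRdef]
    exact hcs2
  have hsq : ∑ t ∈ Finset.Icc 1 T, ((xstar - x t) ⬝ᵥ θs) ^ 2
      ≤ 4 * sβ T ^ 2 * ∑ t ∈ Finset.Icc 1 T, w t := by
    rw [Finset.mul_sum]
    apply Finset.sum_le_sum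
    intro t ht
    have h1 := hstep t ht
    have h2 := hrnn t ht
    calc ((xstar - x t) ⬝ᵥ θs) ^ 2 ≤ (2 * sβ T * Real.sqrt (w t)) ^ 2 :=
          pow_le_pow_left₀ h2 h1 2
      _ = 4 * sβ T ^ 2 * Real.sqrt (w t) ^ 2 := by ring
      _ = 4 * sβ T ^ 2 * w t := by rw [Real.sq_sqrt (hwnn t)]
  have hfin : R ^ 2 ≤ 4 * sβ T ^ 2 * (X ^ 2 / (lam * L1) * ((T:ℝ) * d * LT)) := by
    have hmul1 : (T:ℝ) * (∑ t ∈ Finset.Icc 1 T, ((xstar - x t) ⬝ᵥ θs) ^ 2)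
        ≤ (T:ℝ) * (4 * sβ T ^ 2 * ∑ t ∈ Finset.Icc 1 T, w t) :=
      mul_le_mul_of_nonneg_left hsq (Nat.cast_nonneg T)
    have hmul2 : (T:ℝ) * (4 * sβ T ^ 2 * ∑ t ∈ Finset.Icc 1 T, w t)
        ≤ (T:ℝ) * (4 * sβ T ^ 2 * (X ^ 2 / (lam * L1) * ((d:ℝ) * LT))) := by
      apply mul_le_mul_of_nonneg_left _ (Nat.cast_nonneg T)
      apply mul_le_mul_of_nonneg_left hwsum (by positivity)
    calc R ^ 2 ≤ (T:ℝ) * ∑ t ∈ Finset.Icc 1 T, ((xstar - x t) ⬝ᵥ θs) ^ 2 := hCS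
      _ ≤ (T:ℝ) * (4 * sβ T ^ 2 * (X ^ 2 / (lam * L1) * ((d:ℝ) * LT))) := le_trans hmul1 hmul2
      _ = 4 * sβ T ^ 2 * (X ^ 2 / (lam * L1) * ((T:ℝ) * d * LT)) := by ring
  -- finish
  rw [← hsβ T]
  have hARGnn : (0:ℝ) ≤ X ^ 2 / (lam * L1) * ((T:ℝ) * d * LT) := by
    apply mul_nonneg
    · positivity
    · have : (0:ℝ) ≤ (T:ℝ) * d := by positivity
      exact mul_nonneg this hLTnn
  have h2β : (0:ℝ) ≤ 2 * sβ T := by linarith [hβnn T]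
  calc R = Real.sqrt (R ^ 2) := (Real.sqrt_sq hRnn).symm
    _ ≤ Real.sqrt (4 * sβ T ^ 2 * (X ^ 2 / (lam * L1) * ((T:ℝ) * d * LT))) :=
        Real.sqrt_le_sqrt hfin
    _ = Real.sqrt ((2 * sβ T) ^ 2) * Real.sqrt (X ^ 2 / (lam * L1) * ((T:ℝ) * d * LT)) := by
        rw [← Real.sqrt_mul (sq_nonneg _)]
        ring_nf
    _ = 2 * sβ T * Real.sqrt (X ^ 2 / (lam * L1) * ((T:ℝ) * d * LT)) := by
        rw [Real.sqrt_sq h2β]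
    _ ≤ 4 * Real.sqrt (X ^ 2 / (lam * L1) * ((T:ℝ) * d * LT)) * sβ T := by
        nlinarith [Real.sqrt_nonneg (X ^ 2 / (lam * L1) * ((T:ℝ) * d * LT)), hβnn T]
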